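/- arXiv:1609.03514 — 2 statements merged into one kernel-verified Lean document; each statement's English description precedes it below -/
import Mathlib

section
/- Let 0 ≤ ρ ≤ 1 and let σ : ℤ → ℂ satisfy |σ(ξ)| ≤ C|ξ|^{-ρ} for ξ ≠ 0 and |σ(0)| ≤ C. Let r ∈ ℝ and s ∈ (0,1] with r + 1/2 - ρ ≤ s. Then there is a constant C' such that for every 2π-periodic Hölder continuous function f of order s: sup_{m∈ℕ} 2^{mr} · sup_{x∈[0,2π)} |∑_{2^m ≤ |ξ| < 2^{m+1}} σ(ξ) f̂(ξ) e^{ixξ}| ≤ C' · ‖f‖_{Λ^s}, where ‖f‖_{Λ^s} = sup_x |f(x)| + sup_{x,y, y≠0} |f(x-y)-f(x)|/|y|^s. -/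
noncomputable def fourierCoef (f : ℝ → ℂ) (ξ : ℤ) : ℂ :=
  (1 / (2 * Real.pi)) * ∫ x in (0:ℝ)..(2 * Real.pi), f x * Complex.exp (-(Complex.I * (ξ:ℂ) * (x:ℂ)))

noncomputable def dyadicBlock (m : ℕ) : Finset ℤ :=
  (Finset.Icc (-(2^(m+1) : ℤ)) (2^(m+1))).filter fun ξ => 2^m ≤ |ξ| ∧ |ξ| < 2^(m+1)

open MeasureTheory Finset Real

/-! On the `m`-th dyadic block the shift `h = 2π / (3 · 2 ^ m)` gives `cos (ξ h) ≤ 0`, hence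
`‖exp (-i ξ h) - 1‖ ≥ 1` and `‖f̂ ξ‖ ≤ ‖(f (· - h) - f)^ ξ‖`. By Cauchy–Schwarz and Bessel's inequality
the `ℓ¹` norm of these coefficients over the block is at most `√(#block) · sup ‖f (· - h) - f‖`,
which is `≲ 2 ^ (m / 2) · B h ^ s ≍ 2 ^ (m (1/2 - s)) B`. The symbol contributes `C 2 ^ (-m ρ)`, and
`r + 1/2 - ρ ≤ s` makes the weighted product bounded uniformly in `m`. -/

section Fourier

open Complex

lemma fourierCoef_eq_fourierCoeffOn (f : ℝ → ℂ) (ξ : ℤ) :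
    fourierCoef f ξ = fourierCoeffOn two_pi_pos f ξ := by
  have : Fact (0 < 2 * π) := ⟨two_pi_pos⟩
  rw [fourierCoeffOn_eq_integral, fourierCoef, sub_zero, Complex.real_smul]
  push_cast
  congr 1
  refine intervalIntegral.integral_congr fun x _ => ?_
  rw [fourier_coe_apply, smul_eq_mul, mul_comm]
  congr 2
  push_cast
  field_simp

lemma sum_sq_norm_fourierCoef_le {f : ℝ → ℂ} (hf : AEStronglyMeasurable f) {D : ℝ}
    (hD : ∀ x, ‖f x‖ ≤ D) (S : Finset ℤ) :
    ∑ ξ ∈ S, ‖fourierCoef f ξ‖ ^ 2 ≤ D ^ 2 := by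
  have hL2 : MemLp f 2 (volume.restrict (Set.Ioc 0 (2 * π))) :=
    MemLp.of_bound hf.restrict D (ae_of_all _ hD)
  have hparseval := hasSum_sq_fourierCoeffOn two_pi_pos hL2
  simp only [← fourierCoef_eq_fourierCoeffOn, sub_zero, smul_eq_mul] at hparseval
  have hint : ∫ x in (0:ℝ)..2 * π, ‖f x‖ ^ 2 ≤ D ^ 2 * (2 * π) := by
    refine (le_norm_self _).trans ?_
    simpa [abs_of_pos two_pi_pos] using
      intervalIntegral.norm_integral_le_of_norm_le_const (a := 0) (b := 2 * π)
        (f := fun x => ‖f x‖ ^ 2)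
        fun x _ => by simpa using pow_le_pow_left₀ (norm_nonneg _) (hD x) 2
  calc ∑ ξ ∈ S, ‖fourierCoef f ξ‖ ^ 2
      ≤ (2 * π)⁻¹ * ∫ x in (0:ℝ)..2 * π, ‖f x‖ ^ 2 :=
        sum_le_hasSum S (fun _ _ => by positivity) hparseval
    _ ≤ D ^ 2 := by
        rw [inv_mul_le_iff₀ two_pi_pos]; linarith

lemma sum_norm_fourierCoef_le {f : ℝ → ℂ} (hf : AEStronglyMeasurable f) {D : ℝ}
    (hD : ∀ x, ‖f x‖ ≤ D) (S : Finset ℤ) :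
    ∑ ξ ∈ S, ‖fourierCoef f ξ‖ ≤ √(#S) * D := by
  have hD0 : 0 ≤ D := (norm_nonneg _).trans (hD 0)
  rw [← Real.sqrt_sq hD0, ← Real.sqrt_mul (Nat.cast_nonneg _)]
  refine Real.le_sqrt_of_sq_le ((sq_sum_le_card_mul_sum_sq).trans ?_)
  exact mul_le_mul_of_nonneg_left (sum_sq_norm_fourierCoef_le hf hD S) (Nat.cast_nonneg _)

lemma fourierCoef_comp_sub {f : ℝ → ℂ} (hf : Function.Periodic f (2 * π)) (h : ℝ)
    (ξ : ℤ) :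
    fourierCoef (fun x => f (x - h)) ξ = cexp (-(I * ξ * h)) * fourierCoef f ξ := by
  set φ : ℝ → ℂ := fun x => f x * cexp (-(I * ξ * x))
  have hφ : Function.Periodic φ (2 * π) := fun x => by
    have hexp : cexp (-(I * ξ * ↑(x + 2 * π))) = cexp (-(I * ξ * x)) := by
      rw [show -(I * ξ * ↑(x + 2 * π)) = -(I * ξ * x) + (-ξ : ℤ) * (2 * π * I) by
        push_cast; ring, Complex.exp_add, exp_int_mul_two_pi_mul_I, mul_one]
    simp only [φ, hf x, hexp]
  have hshift : ∀ x : ℝ, f (x - h) * cexp (-(I * ξ * x)) = cexp (-(I * ξ * h)) * φ (x - h) :=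
    fun x => by
      simp only [φ, mul_left_comm _ (f (x - h)), ← Complex.exp_add]
      congr 2
      push_cast
      ring
  have hint : ∫ x in (0:ℝ)..2 * π, φ (x - h) = ∫ x in (0:ℝ)..2 * π, φ x := by
    rw [intervalIntegral.integral_comp_sub_right, zero_sub,
      show 2 * π - h = -h + 2 * π by ring, hφ.intervalIntegral_add_eq (-h) 0,
      zero_add]
  simp only [fourierCoef, hshift, intervalIntegral.integral_const_mul, hint, φ]
  ring

lemma fourierCoef_sub_comp_sub {f : ℝ → ℂ} (hf : Continuous f)
    (hper : Function.Periodic f (2 * π)) (h : ℝ) (ξ : ℤ) :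
    fourierCoef (fun x => f (x - h) - f x) ξ = (cexp (-(I * ξ * h)) - 1) * fourierCoef f ξ := by
  have hint : ∀ g : ℝ → ℂ, Continuous g →
      IntervalIntegrable (fun x => g x * cexp (-(I * ξ * x))) volume 0 (2 * π) :=
    fun g hg => (hg.mul (by fun_prop)).intervalIntegrable _ _
  rw [sub_one_mul, ← fourierCoef_comp_sub hper, fourierCoef, fourierCoef, fourierCoef, ← mul_sub,
    ← intervalIntegral.integral_sub (hint (fun x => f (x - h)) (by fun_prop)) (hint f hf)]
  simp only [sub_mul]

lemma one_le_norm_exp_mul_I_sub_one {θ : ℝ} (hθ : Real.cos θ ≤ 0) :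
    1 ≤ ‖cexp (θ * I) - 1‖ :=
  calc 1 ≤ |(cexp (θ * I) - 1).re| := by
        rw [sub_re, exp_ofReal_mul_I_re, one_re, abs_of_nonpos (by linarith)]
        linarith
    _ ≤ ‖cexp (θ * I) - 1‖ := abs_re_le_norm _

lemma norm_fourierCoef_le_of_cos_nonpos {f : ℝ → ℂ} (hf : Continuous f)
    (hper : Function.Periodic f (2 * π)) {h : ℝ} {ξ : ℤ} (hcos : Real.cos (ξ * h) ≤ 0) :
    ‖fourierCoef f ξ‖ ≤ ‖fourierCoef (fun x => f (x - h) - f x) ξ‖ := by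
  have hexp : cexp (-(I * ξ * h)) = cexp ((-(ξ * h) : ℝ) * I) := by push_cast; ring_nf
  rw [fourierCoef_sub_comp_sub hf hper, norm_mul, hexp]
  exact le_mul_of_one_le_left (norm_nonneg _)
    (one_le_norm_exp_mul_I_sub_one (by rwa [Real.cos_neg]))

lemma norm_sum_mul_mul_exp_le {S : Finset ℤ} {σ a : ℤ → ℂ} {P : ℝ} (hσ : ∀ ξ ∈ S, ‖σ ξ‖ ≤ P)
    (x : ℝ) : ‖∑ ξ ∈ S, σ ξ * a ξ * cexp (I * x * ξ)‖ ≤ P * ∑ ξ ∈ S, ‖a ξ‖ := by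
  rw [mul_sum]
  refine (norm_sum_le _ _).trans (sum_le_sum fun ξ hξ => ?_)
  rw [norm_mul, norm_mul, show I * x * ξ = ((x * ξ : ℝ) : ℂ) * I by push_cast; ring,
    norm_exp_ofReal_mul_I, mul_one]
  exact mul_le_mul_of_nonneg_right (hσ ξ hξ) (norm_nonneg _)

end Fourier

lemma mem_dyadicBlock {m : ℕ} {ξ : ℤ} :
    ξ ∈ dyadicBlock m ↔ (2:ℝ) ^ m ≤ |(ξ:ℝ)| ∧ |(ξ:ℝ)| < 2 ^ (m + 1) := by
  rw [dyadicBlock, mem_filter, mem_Icc, and_iff_right_of_imp fun h => abs_le.mp h.2.le,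
    ← Int.cast_abs]
  norm_cast

lemma ne_zero_of_mem_dyadicBlock {m : ℕ} {ξ : ℤ} (hξ : ξ ∈ dyadicBlock m) : ξ ≠ 0 := by
  rintro rfl
  exact (pow_pos two_pos m).not_ge (by simpa using (mem_dyadicBlock.mp hξ).1)

lemma card_dyadicBlock_le (m : ℕ) : #(dyadicBlock m) ≤ 2 ^ (m + 3) := by
  refine (card_filter_le _ _).trans ?_
  rw [Int.card_Icc, show (2:ℤ) ^ (m + 1) + 1 - -2 ^ (m + 1) = ((2 ^ (m + 2) + 1 : ℕ) : ℤ) by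
    push_cast; ring, Int.toNat_natCast, pow_succ 2 (m + 2)]
  linarith [Nat.one_le_two_pow (n := m + 2)]

lemma cos_nonpos_of_mem_dyadicBlock {m : ℕ} {ξ : ℤ} (hξ : ξ ∈ dyadicBlock m) :
    cos (ξ * (2 * π / (3 * 2 ^ m))) ≤ 0 := by
  obtain ⟨hlo, hhi⟩ := mem_dyadicBlock.mp hξ
  have hh : 0 < 2 * π / (3 * 2 ^ m) := by positivity
  have hscale : (2:ℝ) ^ m * (2 * π / (3 * 2 ^ m)) = 2 * π / 3 := by field_simp
  rw [← cos_abs, abs_mul, abs_of_pos hh]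
  apply cos_nonpos_of_pi_div_two_le_of_le
  · nlinarith [mul_le_mul_of_nonneg_right hlo hh.le, pi_pos]
  · nlinarith [mul_le_mul_of_nonneg_right hhi.le hh.le, pi_pos, pow_succ (2:ℝ) m]

lemma abs_rpow_neg_le_of_mem_dyadicBlock {m : ℕ} {ξ : ℤ} (hξ : ξ ∈ dyadicBlock m) {ρ : ℝ}
    (hρ : 0 ≤ ρ) : |(ξ:ℝ)| ^ (-ρ) ≤ (2:ℝ) ^ (m * -ρ) := by
  rw [rpow_mul zero_le_two, rpow_natCast]
  exact rpow_le_rpow_of_nonpos (by positivity) (mem_dyadicBlock.mp hξ).1 (neg_nonpos.mpr hρ)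

lemma dyadic_weight_le (m : ℕ) {r ρ s : ℝ} (hrs : r + 1 / 2 - ρ ≤ s) :
    (2:ℝ) ^ (m * r) * 2 ^ (m * -ρ) * √(2 ^ (m + 3)) * (2 * π / (3 * 2 ^ m)) ^ s
      ≤ 2 ^ (3 / 2 : ℝ) * (2 * π / 3) ^ s := by
  have hsqrt : √((2:ℝ) ^ (m + 3)) = 2 ^ ((m + 3) / 2 : ℝ) := by
    rw [sqrt_eq_rpow, ← rpow_natCast, ← rpow_mul zero_le_two]
    push_cast
    ring_nf
  have hshift : (2 * π / (3 * 2 ^ m)) ^ s = (2 * π / 3) ^ s * (2:ℝ) ^ (-(m * s)) := by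
    rw [div_mul_eq_div_div, div_rpow (by positivity) (by positivity), ← rpow_natCast,
      ← rpow_mul zero_le_two, rpow_neg zero_le_two, div_eq_mul_inv]
  have hexp : (m:ℝ) * r + m * -ρ + (m + 3) / 2 + -(m * s) ≤ 3 / 2 := by
    nlinarith [(Nat.cast_nonneg m : (0:ℝ) ≤ m)]
  calc (2:ℝ) ^ (m * r) * 2 ^ (m * -ρ) * √(2 ^ (m + 3)) * (2 * π / (3 * 2 ^ m)) ^ s
      = 2 ^ ((m:ℝ) * r + m * -ρ + (m + 3) / 2 + -(m * s)) * (2 * π / 3) ^ s := by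
        rw [hsqrt, hshift, rpow_add two_pos, rpow_add two_pos, rpow_add two_pos]
        ring
    _ ≤ 2 ^ (3 / 2 : ℝ) * (2 * π / 3) ^ s := by
        gcongr
        · exact one_le_two

lemma sum_norm_fourierCoef_dyadicBlock_le {f : ℝ → ℂ} (hf : Continuous f)
    (hper : Function.Periodic f (2 * π)) (m : ℕ) {D : ℝ}
    (hD : ∀ x, ‖f (x - 2 * π / (3 * 2 ^ m)) - f x‖ ≤ D) :
    ∑ ξ ∈ dyadicBlock m, ‖fourierCoef f ξ‖ ≤ √(2 ^ (m + 3)) * D := by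
  have hD0 : 0 ≤ D := (norm_nonneg _).trans (hD 0)
  calc ∑ ξ ∈ dyadicBlock m, ‖fourierCoef f ξ‖
      ≤ ∑ ξ ∈ dyadicBlock m, ‖fourierCoef (fun x => f (x - 2 * π / (3 * 2 ^ m)) - f x) ξ‖ :=
        sum_le_sum fun ξ hξ =>
          norm_fourierCoef_le_of_cos_nonpos hf hper (cos_nonpos_of_mem_dyadicBlock hξ)
    _ ≤ √(#(dyadicBlock m)) * D :=
        sum_norm_fourierCoef_le (by fun_prop : Continuous _).aestronglyMeasurable hD _
    _ ≤ √(2 ^ (m + 3)) * D := by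
        gcongr
        exact_mod_cast card_dyadicBlock_le m

theorem multiplier_holder_besov_infty_general (ρ C r s : ℝ)
    (hρ0 : 0 ≤ ρ)
    (hrs : r + 1/2 - ρ ≤ s)
    (σ : ℤ → ℂ) (hσ : ∀ ξ : ℤ, ξ ≠ 0 → ‖σ ξ‖ ≤ C * |(ξ:ℝ)| ^ (-ρ)) :
    ∃ C' : ℝ, ∀ f : ℝ → ℂ, Continuous f → (∀ x, f (x + 2 * Real.pi) = f x) →
      ∀ A B : ℝ, (∀ x, ‖f x‖ ≤ A) →
      (∀ x y : ℝ, ‖f (x - y) - f x‖ ≤ B * |y| ^ s) →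
      ∀ m : ℕ, ∀ x ∈ Set.Ico (0:ℝ) (2 * Real.pi),
        (2:ℝ) ^ ((m:ℝ) * r) *
          ‖∑ ξ ∈ dyadicBlock m,
            σ ξ * fourierCoef f ξ * Complex.exp (Complex.I * (x:ℂ) * (ξ:ℂ))‖
        ≤ C' * (A + B) := by
  have hC : 0 ≤ C := by simpa using (norm_nonneg _).trans (hσ 1 one_ne_zero)
  refine ⟨C * (2 ^ (3 / 2 : ℝ) * (2 * π / 3) ^ s), fun f hf hper A B hA hB m x _ => ?_⟩
  set h : ℝ := 2 * π / (3 * 2 ^ m)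
  have hA0 : 0 ≤ A := (norm_nonneg _).trans (hA 0)
  have hB0 : 0 ≤ B := by simpa using (norm_nonneg _).trans (hB 0 1)
  have hσm : ∀ ξ ∈ dyadicBlock m, ‖σ ξ‖ ≤ C * 2 ^ (m * -ρ) := fun ξ hξ =>
    (hσ ξ (ne_zero_of_mem_dyadicBlock hξ)).trans
      (mul_le_mul_of_nonneg_left (abs_rpow_neg_le_of_mem_dyadicBlock hξ hρ0) hC)
  have hcoef : ∑ ξ ∈ dyadicBlock m, ‖fourierCoef f ξ‖ ≤ √(2 ^ (m + 3)) * (B * h ^ s) :=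
    sum_norm_fourierCoef_dyadicBlock_le hf hper m fun u => by
      simpa [abs_of_pos (show 0 < h by positivity)] using hB u h
  calc (2:ℝ) ^ ((m:ℝ) * r) * ‖∑ ξ ∈ dyadicBlock m,
        σ ξ * fourierCoef f ξ * Complex.exp (Complex.I * (x:ℂ) * (ξ:ℂ))‖
      ≤ 2 ^ ((m:ℝ) * r) * (C * 2 ^ (m * -ρ) * (√(2 ^ (m + 3)) * (B * h ^ s))) := by
        gcongr
        exact (norm_sum_mul_mul_exp_le hσm x).trans (by gcongr)
    _ = C * B * (2 ^ ((m:ℝ) * r) * 2 ^ (m * -ρ) * √(2 ^ (m + 3)) * h ^ s) := by ring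
    _ ≤ C * B * (2 ^ (3 / 2 : ℝ) * (2 * π / 3) ^ s) :=
        mul_le_mul_of_nonneg_left (dyadic_weight_le m hrs) (mul_nonneg hC hB0)
    _ ≤ C * (2 ^ (3 / 2 : ℝ) * (2 * π / 3) ^ s) * (A + B) := by
        rw [mul_right_comm]
        gcongr
        linarith

theorem multiplier_holder_besov_infty (ρ C r s : ℝ)
    (hρ0 : 0 ≤ ρ) (hρ1 : ρ ≤ 1) (hs0 : 0 < s) (hs1 : s ≤ 1)
    (hrs : r + 1/2 - ρ ≤ s)
    (σ : ℤ → ℂ) (hσ : ∀ ξ : ℤ, ξ ≠ 0 → ‖σ ξ‖ ≤ C * |(ξ:ℝ)| ^ (-ρ))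
    (hσ0 : ‖σ 0‖ ≤ C) :
    ∃ C' : ℝ, ∀ f : ℝ → ℂ, Continuous f → (∀ x, f (x + 2 * Real.pi) = f x) →
      ∀ A B : ℝ, (∀ x, ‖f x‖ ≤ A) →
      (∀ x y : ℝ, ‖f (x - y) - f x‖ ≤ B * |y| ^ s) →
      ∀ m : ℕ, ∀ x ∈ Set.Ico (0:ℝ) (2 * Real.pi),
        (2:ℝ) ^ ((m:ℝ) * r) *
          ‖∑ ξ ∈ dyadicBlock m,
            σ ξ * fourierCoef f ξ * Complex.exp (Complex.I * (x:ℂ) * (ξ:ℂ))‖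
        ≤ C' * (A + B) :=
  multiplier_holder_besov_infty_general ρ C r s hρ0 hrs σ hσ
end

section
/- Let 2/3 < p ≤ 2 and s_p = 1/p - 1/2. For every s with s_p < s < 1 there is a constant C such that every 2π-periodic Hölder continuous function f of order s satisfies (∑_{ξ∈ℤ} |f̂(ξ)|^p)^{1/p} ≤ C‖f‖_{Λ^s}. -/
open MeasureTheory Real Function AddCircle

instance : Fact (0 < 2 * π) := ⟨by positivity⟩

lemma periodic_exp_neg_I_mul_intCast (ξ : ℤ) :
    Periodic (fun x : ℝ => Complex.exp (-(Complex.I * ξ * x))) (2 * π) := fun x => by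
  have : -(Complex.I * ξ * ↑(x + 2 * π))
      = -(Complex.I * ξ * x) + (-ξ : ℤ) * (2 * π * Complex.I) := by push_cast; ring
  simp only [this, Complex.exp_add, Complex.exp_int_mul_two_pi_mul_I, mul_one]

lemma fourierCoef_eq_fourierCoeff_lift {f : ℝ → ℂ} (hf : Periodic f (2 * π)) (ξ : ℤ) :
    fourierCoef f ξ = fourierCoeff hf.lift ξ := by
  rw [fourierCoeff_eq_intervalIntegral _ ξ 0, zero_add, fourierCoef, Complex.real_smul]
  push_cast
  congr 1
  refine intervalIntegral.integral_congr fun x _ => ?_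
  rw [smul_eq_mul, Periodic.lift_coe, fourier_coe_apply, mul_comm]
  congr 2
  field_simp
  push_cast
  ring

lemma hasSum_sq_norm_fourierCoef {f : ℝ → ℂ} (hc : Continuous f) (hf : Periodic f (2 * π)) :
    HasSum (fun ξ : ℤ => ‖fourierCoef f ξ‖ ^ 2)
      ((2 * π)⁻¹ * ∫ x in (0:ℝ)..2 * π, ‖f x‖ ^ 2) := by
  set F : C(AddCircle (2 * π), ℂ) := ⟨hf.lift, continuous_coinduced_dom.mpr hc⟩
  have hcoef : ∀ ξ : ℤ, fourierCoeff (ContinuousMap.toLp 2 haarAddCircle ℂ F) ξ = fourierCoef f ξ :=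
    fun ξ => by rw [fourierCoeff_toLp, fourierCoef_eq_fourierCoeff_lift hf]; rfl
  have hint : ∫ t, ‖ContinuousMap.toLp 2 haarAddCircle ℂ F t‖ ^ 2 ∂haarAddCircle
      = (2 * π)⁻¹ * ∫ x in (0:ℝ)..2 * π, ‖f x‖ ^ 2 := by
    rw [integral_congr_ae ((ContinuousMap.coeFn_toLp haarAddCircle F).mono fun t ht => by
      rw [ht])]
    have h := AddCircle.intervalIntegral_preimage (2 * π) 0 fun t => ‖F t‖ ^ 2
    rw [zero_add, AddCircle.volume_eq_smul_haarAddCircle, integral_smul_measure,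
      ENNReal.toReal_ofReal (by positivity), smul_eq_mul] at h
    simp only [F, ContinuousMap.coe_mk, Periodic.lift_coe] at h
    rw [h]
    field_simp
    rfl
  simpa only [hcoef, hint] using hasSum_sq_fourierCoeff (ContinuousMap.toLp 2 haarAddCircle ℂ F)

lemma fourierCoef_comp_add_right {f : ℝ → ℂ} (hf : Periodic f (2 * π)) (h : ℝ) (ξ : ℤ) :
    fourierCoef (fun x => f (x + h)) ξ = Complex.exp (Complex.I * ξ * h) * fourierCoef f ξ := by
  set g : ℝ → ℂ := fun u => f u * Complex.exp (-(Complex.I * ξ * u))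
  have hg : Periodic g (2 * π) := hf.mul (periodic_exp_neg_I_mul_intCast ξ)
  have hshift : ∀ x : ℝ, f (x + h) * Complex.exp (-(Complex.I * ξ * x))
      = Complex.exp (Complex.I * ξ * h) * g (x + h) := fun x => by
    simp only [g, mul_left_comm _ (f _), ← Complex.exp_add]
    push_cast
    ring_nf
  simp only [fourierCoef, hshift, intervalIntegral.integral_const_mul,
    intervalIntegral.integral_comp_add_right g h, zero_add]
  rw [add_comm (2 * π), hg.intervalIntegral_add_eq h 0, zero_add]
  ring

lemma fourierCoef_sub {f g : ℝ → ℂ} (hf : Continuous f) (hg : Continuous g) (ξ : ℤ) :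
    fourierCoef (fun x => f x - g x) ξ = fourierCoef f ξ - fourierCoef g ξ := by
  simp only [fourierCoef, sub_mul]
  rw [intervalIntegral.integral_sub, mul_sub] <;>
    exact (by fun_prop : Continuous _).intervalIntegrable _ _

lemma sum_sq_norm_fourierCoef_le_s9 {g : ℝ → ℂ} (hc : Continuous g) (hg : Periodic g (2 * π))
    {M : ℝ} (hM : ∀ x, ‖g x‖ ≤ M) (G : Finset ℤ) :
    ∑ ξ ∈ G, ‖fourierCoef g ξ‖ ^ 2 ≤ M ^ 2 := by
  have hint : ∫ x in (0:ℝ)..2 * π, ‖g x‖ ^ 2 ≤ 2 * π * M ^ 2 := by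
    have := intervalIntegral.integral_mono_on (μ := volume) (g := fun _ => M ^ 2) two_pi_pos.le
      ((hc.norm.pow 2).intervalIntegrable _ _) intervalIntegrable_const
      fun x _ => pow_le_pow_left₀ (norm_nonneg _) (hM x) 2
    simpa using this
  calc ∑ ξ ∈ G, ‖fourierCoef g ξ‖ ^ 2
      ≤ (2 * π)⁻¹ * ∫ x in (0:ℝ)..2 * π, ‖g x‖ ^ 2 :=
        sum_le_hasSum G (fun _ _ => sq_nonneg _) (hasSum_sq_norm_fourierCoef hc hg)
    _ ≤ (2 * π)⁻¹ * (2 * π * M ^ 2) := by gcongr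
    _ = M ^ 2 := by field_simp

lemma sum_sq_norm_exp_sub_one_mul_fourierCoef_le {f : ℝ → ℂ} (hc : Continuous f)
    (hf : Periodic f (2 * π)) {h M : ℝ} (hM : ∀ x, ‖f (x + h) - f x‖ ≤ M) (G : Finset ℤ) :
    ∑ ξ ∈ G, ‖Complex.exp (Complex.I * ξ * h) - 1‖ ^ 2 * ‖fourierCoef f ξ‖ ^ 2 ≤ M ^ 2 := by
  have hdiff : Periodic (fun x => f (x + h) - f x) (2 * π) := fun x => by
    simp only [add_right_comm x, hf _]
  convert sum_sq_norm_fourierCoef_le_s9 (by fun_prop) hdiff hM G using 2 with ξ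
  rw [fourierCoef_sub (by fun_prop) hc, fourierCoef_comp_add_right hf, ← sub_one_mul, norm_mul,
    mul_pow]

lemma two_le_norm_exp_I_mul_sub_one_sq {t : ℝ} (h1 : π / 2 ≤ |t|) (h2 : |t| ≤ π + π / 2) :
    2 ≤ ‖Complex.exp (Complex.I * t) - 1‖ ^ 2 := by
  have hcos : cos t ≤ 0 := cos_abs t ▸ cos_nonpos_of_pi_div_two_le_of_le h1 h2
  rw [Complex.norm_exp_I_mul_ofReal_sub_one, norm_mul, mul_pow]
  simp only [Real.norm_eq_abs, sq_abs]
  have := cos_sq (t / 2)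
  rw [mul_div_cancel₀ t two_ne_zero] at this
  nlinarith [sin_sq_add_cos_sq (t / 2)]

lemma sum_rpow_le_of_sum_sq_le {ι : Type*} {G : Finset ι} {a : ι → ℝ} (ha : ∀ i ∈ G, 0 ≤ a i)
    {p S N : ℝ} (hp0 : 0 < p) (hp2 : p ≤ 2) (hS : 0 ≤ S) (hsq : ∑ i ∈ G, a i ^ 2 ≤ S ^ 2)
    (hN : (G.card : ℝ) ≤ N) :
    ∑ i ∈ G, a i ^ p ≤ S ^ p * N ^ (1 - p / 2) := by
  have hq : 1 ≤ 2 / p := by rw [le_div_iff₀ hp0]; linarith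
  have hN0 : 0 ≤ N := (Nat.cast_nonneg _).trans hN
  have hsum0 : 0 ≤ ∑ i ∈ G, a i ^ p := Finset.sum_nonneg fun i hi => rpow_nonneg (ha i hi) p
  have hpow : (∑ i ∈ G, a i ^ p) ^ (2 / p) ≤ N ^ (2 / p - 1) * S ^ 2 := by
    calc (∑ i ∈ G, a i ^ p) ^ (2 / p)
        ≤ (G.card : ℝ) ^ (2 / p - 1) * ∑ i ∈ G, (a i ^ p) ^ (2 / p) :=
          Real.rpow_sum_le_const_mul_sum_rpow_of_nonneg G hq fun i hi => rpow_nonneg (ha i hi) p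
      _ = (G.card : ℝ) ^ (2 / p - 1) * ∑ i ∈ G, a i ^ 2 := by
          congr 1
          refine Finset.sum_congr rfl fun i hi => ?_
          rw [← rpow_mul (ha i hi), mul_div_cancel₀ _ hp0.ne', rpow_two]
      _ ≤ N ^ (2 / p - 1) * S ^ 2 := by gcongr
  calc ∑ i ∈ G, a i ^ p = ((∑ i ∈ G, a i ^ p) ^ (2 / p)) ^ (p / 2) := by
        rw [← rpow_mul hsum0, div_mul_div_cancel₀ hp0.ne', div_self two_ne_zero, rpow_one]
    _ ≤ (N ^ (2 / p - 1) * S ^ 2) ^ (p / 2) := by gcongr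
    _ = S ^ p * N ^ (1 - p / 2) := by
        rw [mul_rpow (rpow_nonneg hN0 _) (sq_nonneg S), ← rpow_mul hN0, ← rpow_two,
          ← rpow_mul hS, mul_comm]
        congr 2 <;> field_simp

lemma tsum_le_of_dyadic_blocks {a : ℤ → ℝ} (ha : ∀ ξ, 0 ≤ a ξ) {K ρ : ℝ} (hρ0 : 0 ≤ ρ)
    (hρ1 : ρ < 1)
    (hblock : ∀ (n : ℕ) (G : Finset ℤ), (∀ ξ ∈ G, 2 ^ n ≤ ξ.natAbs ∧ ξ.natAbs < 2 ^ (n + 1)) →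
      ∑ ξ ∈ G, a ξ ≤ K * ρ ^ n) :
    ∑' ξ, a ξ ≤ a 0 + K / (1 - ρ) := by
  have hK : 0 ≤ K := by simpa using hblock 0 ∅
  set L : ℤ → ℕ := fun ξ => Nat.log 2 ξ.natAbs
  have hL : ∀ ξ : ℤ, ξ ≠ 0 → 2 ^ L ξ ≤ ξ.natAbs ∧ ξ.natAbs < 2 ^ (L ξ + 1) := fun ξ hξ =>
    ⟨Nat.pow_log_le_self 2 (Int.natAbs_ne_zero.2 hξ), Nat.lt_pow_succ_log_self one_lt_two _⟩
  have hfin : ∀ F : Finset ℤ, ∑ ξ ∈ F, a ξ ≤ a 0 + K / (1 - ρ) := fun F => by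
    set F' := F.erase 0
    calc ∑ ξ ∈ F, a ξ ≤ ∑ ξ ∈ insert 0 F', a ξ :=
          Finset.sum_le_sum_of_subset_of_nonneg (Finset.insert_erase_subset 0 F) fun ξ _ _ => ha ξ
      _ = a 0 + ∑ n ∈ F'.image L, ∑ ξ ∈ F' with L ξ = n, a ξ := by
          rw [Finset.sum_insert (Finset.notMem_erase 0 F),
            Finset.sum_fiberwise_of_maps_to fun ξ hξ => Finset.mem_image_of_mem L hξ]
      _ ≤ a 0 + ∑ n ∈ F'.image L, K * ρ ^ n := by
          gcongr with n
          refine hblock n _ fun ξ hξ => ?_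
          obtain ⟨hξF, rfl⟩ := Finset.mem_filter.1 hξ
          exact hL ξ (Finset.ne_of_mem_erase hξF)
      _ ≤ a 0 + ∑' n, K * ρ ^ n := by
          gcongr
          exact ((summable_geometric_of_lt_one hρ0 hρ1).mul_left K).sum_le_tsum _
            fun n _ => by positivity
      _ = a 0 + K / (1 - ρ) := by
          rw [tsum_mul_left, tsum_geometric_of_lt_one hρ0 hρ1, div_eq_mul_inv]
  exact tsum_le_of_sum_le' (by simpa using hfin ∅) hfin

lemma card_le_two_mul_of_natAbs_lt {G : Finset ℤ} {m : ℕ} (hG : ∀ ξ ∈ G, ξ.natAbs < m) :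
    G.card ≤ 2 * m := by
  have hsub : G ⊆ Finset.Ioo (-m) m := fun ξ hξ => by
    have h := hG ξ hξ
    zify at h
    exact Finset.mem_Ioo.2 (abs_lt.1 h)
  calc G.card ≤ (Finset.Ioo (-m : ℤ) m).card := Finset.card_le_card hsub
    _ ≤ 2 * m := by rw [Int.card_Ioo]; omega

lemma two_le_norm_exp_I_mul_sub_one_sq_of_dyadic {n : ℕ} {ξ : ℤ}
    (hξ : 2 ^ n ≤ ξ.natAbs ∧ ξ.natAbs < 2 ^ (n + 1)) :
    2 ≤ ‖Complex.exp (Complex.I * ξ * (π / 2 / 2 ^ n : ℝ)) - 1‖ ^ 2 := by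
  set h : ℝ := π / 2 / 2 ^ n
  have hh : 0 < h := by positivity
  have habs : |(ξ * h : ℝ)| = ξ.natAbs * h := by
    rw [abs_mul, abs_of_pos hh, Nat.cast_natAbs, Int.cast_abs]
  have hlow : π / 2 ≤ ξ.natAbs * h :=
    calc π / 2 = 2 ^ n * h := by simp only [h]; field_simp
      _ ≤ ξ.natAbs * h := by gcongr; exact_mod_cast hξ.1
  have hup : ξ.natAbs * h ≤ π :=
    calc ξ.natAbs * h ≤ 2 ^ (n + 1) * h := by gcongr; exact_mod_cast hξ.2.le
      _ = π := by simp only [h, pow_succ]; field_simp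
  have := two_le_norm_exp_I_mul_sub_one_sq (t := ξ * h) (habs ▸ hlow) (by linarith [pi_pos])
  simpa [mul_assoc] using this

lemma sum_sq_norm_fourierCoef_dyadic_le {f : ℝ → ℂ} (hc : Continuous f)
    (hf : Periodic f (2 * π)) {s B : ℝ} (hB : ∀ x y : ℝ, ‖f (x - y) - f x‖ ≤ B * |y| ^ s)
    (n : ℕ) (G : Finset ℤ) (hG : ∀ ξ ∈ G, 2 ^ n ≤ ξ.natAbs ∧ ξ.natAbs < 2 ^ (n + 1)) :
    ∑ ξ ∈ G, ‖fourierCoef f ξ‖ ^ 2 ≤ (B * (π / 2 / 2 ^ n) ^ s) ^ 2 := by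
  set h : ℝ := π / 2 / 2 ^ n
  have hshift : ∀ x, ‖f (x + h) - f x‖ ≤ B * h ^ s := fun x => by
    simpa [norm_sub_rev, abs_of_pos (by positivity : 0 < h)] using hB (x + h) h
  have htwice : 2 * ∑ ξ ∈ G, ‖fourierCoef f ξ‖ ^ 2 ≤ (B * h ^ s) ^ 2 := by
    rw [Finset.mul_sum]
    refine le_trans (Finset.sum_le_sum fun ξ hξ => ?_)
      (sum_sq_norm_exp_sub_one_mul_fourierCoef_le hc hf hshift G)
    exact mul_le_mul_of_nonneg_right (two_le_norm_exp_I_mul_sub_one_sq_of_dyadic (hG ξ hξ))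
      (sq_nonneg _)
  have hnonneg : 0 ≤ ∑ ξ ∈ G, ‖fourierCoef f ξ‖ ^ 2 := Finset.sum_nonneg fun _ _ => sq_nonneg _
  linarith

lemma sum_rpow_norm_fourierCoef_dyadic_le {f : ℝ → ℂ} (hc : Continuous f)
    (hf : Periodic f (2 * π)) {p s B : ℝ} (hp0 : 0 < p) (hp2 : p ≤ 2) (hB0 : 0 ≤ B)
    (hB : ∀ x y : ℝ, ‖f (x - y) - f x‖ ≤ B * |y| ^ s) (n : ℕ) (G : Finset ℤ)
    (hG : ∀ ξ ∈ G, 2 ^ n ≤ ξ.natAbs ∧ ξ.natAbs < 2 ^ (n + 1)) :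
    ∑ ξ ∈ G, ‖fourierCoef f ξ‖ ^ p
      ≤ (π / 2) ^ (s * p) * 4 ^ (1 - p / 2) * B ^ p * ((2:ℝ) ^ (1 - p / 2 - s * p)) ^ n := by
  have hcard : (G.card : ℝ) ≤ 2 ^ (n + 2) := by
    have := card_le_two_mul_of_natAbs_lt fun ξ hξ => (hG ξ hξ).2
    rw [pow_succ' 2 (n + 1)]
    exact_mod_cast this
  have ht : (0:ℝ) < 2 ^ n := by positivity
  calc ∑ ξ ∈ G, ‖fourierCoef f ξ‖ ^ p
      ≤ (B * (π / 2 / 2 ^ n) ^ s) ^ p * (2 ^ (n + 2)) ^ (1 - p / 2) :=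
        sum_rpow_le_of_sum_sq_le (fun _ _ => norm_nonneg _) hp0 hp2 (by positivity)
          (sum_sq_norm_fourierCoef_dyadic_le hc hf hB n G hG) hcard
    _ = (π / 2) ^ (s * p) * 4 ^ (1 - p / 2) * B ^ p * ((2:ℝ) ^ (1 - p / 2 - s * p)) ^ n := by
        rw [show (2:ℝ) ^ (n + 2) = 2 ^ n * 4 by ring, rpow_pow_comm zero_le_two,
          mul_rpow hB0 (by positivity), ← rpow_mul (by positivity),
          div_rpow (by positivity) ht.le, mul_rpow ht.le (by norm_num), rpow_sub ht (1 - p / 2)]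
        field_simp

lemma rpow_add_mul_rpow_le {X Y c p : ℝ} (hX : 0 ≤ X) (hY : 0 ≤ Y) (hc : 0 ≤ c) (hp : 0 < p) :
    (X ^ p + c * Y ^ p) ^ (1 / p) ≤ (1 + c) ^ (1 / p) * (X + Y) := by
  have hXY : 0 ≤ X + Y := add_nonneg hX hY
  calc (X ^ p + c * Y ^ p) ^ (1 / p) ≤ ((1 + c) * (X + Y) ^ p) ^ (1 / p) := by
        have hXp : X ^ p ≤ (X + Y) ^ p := rpow_le_rpow hX (by linarith) hp.le
        have hYp : Y ^ p ≤ (X + Y) ^ p := rpow_le_rpow hY (by linarith) hp.le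
        gcongr
        nlinarith
    _ = (1 + c) ^ (1 / p) * (X + Y) := by
        rw [mul_rpow (by linarith) (rpow_nonneg hXY _), one_div, rpow_rpow_inv hXY hp.ne']

theorem szasz_bernstein_general (p s : ℝ) (hp0 : 2/3 < p) (hp1 : p ≤ 2)
    (hs0 : 1/p - 1/2 < s) :
    ∃ C : ℝ, ∀ f : ℝ → ℂ, Continuous f → (∀ x, f (x + 2 * Real.pi) = f x) →
      ∀ A B : ℝ, (∀ x, ‖f x‖ ≤ A) →
      (∀ x y : ℝ, ‖f (x - y) - f x‖ ≤ B * |y| ^ s) →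
      (∑' ξ : ℤ, ‖fourierCoef f ξ‖ ^ p) ^ (1/p) ≤ C * (A + B) := by
  have hp : 0 < p := by linarith
  set ρ : ℝ := 2 ^ (1 - p / 2 - s * p)
  have hρ1 : ρ < 1 := by
    refine rpow_lt_one_of_one_lt_of_neg one_lt_two ?_
    have := mul_lt_mul_of_pos_right hs0 hp
    rw [sub_mul, one_div_mul_cancel hp.ne'] at this
    linarith
  set K : ℝ := (π / 2) ^ (s * p) * 4 ^ (1 - p / 2)
  refine ⟨(1 + K / (1 - ρ)) ^ (1 / p), fun f hc hf A B hA hB => ?_⟩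
  have hA0 : 0 ≤ A := (norm_nonneg _).trans (hA 0)
  have hB0 : 0 ≤ B := by simpa using (norm_nonneg _).trans (hB 0 1)
  have hzero : ‖fourierCoef f 0‖ ^ p ≤ A ^ p := by
    have := sum_sq_norm_fourierCoef_le_s9 hc hf hA {0}
    rw [Finset.sum_singleton, sq_le_sq₀ (norm_nonneg _) hA0] at this
    exact rpow_le_rpow (norm_nonneg _) this hp.le
  have hsum : ∑' ξ : ℤ, ‖fourierCoef f ξ‖ ^ p ≤ A ^ p + K / (1 - ρ) * B ^ p := by
    have := tsum_le_of_dyadic_blocks (fun _ => by positivity) (by positivity) hρ1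
      (sum_rpow_norm_fourierCoef_dyadic_le hc hf hp hp1 hB0 hB)
    rw [mul_div_right_comm] at this
    linarith
  calc (∑' ξ : ℤ, ‖fourierCoef f ξ‖ ^ p) ^ (1 / p)
      ≤ (A ^ p + K / (1 - ρ) * B ^ p) ^ (1 / p) := by gcongr
    _ ≤ (1 + K / (1 - ρ)) ^ (1 / p) * (A + B) :=
        rpow_add_mul_rpow_le hA0 hB0 (div_nonneg (by positivity) (by linarith)) hp

/-- Szász's generalization of Bernstein's theorem. -/
theorem szasz_bernstein (p s : ℝ) (hp0 : 2/3 < p) (hp1 : p ≤ 2)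
    (hs0 : 1/p - 1/2 < s) (hs1 : s < 1) :
    ∃ C : ℝ, ∀ f : ℝ → ℂ, Continuous f → (∀ x, f (x + 2 * Real.pi) = f x) →
      ∀ A B : ℝ, (∀ x, ‖f x‖ ≤ A) →
      (∀ x y : ℝ, ‖f (x - y) - f x‖ ≤ B * |y| ^ s) →
      (∑' ξ : ℤ, ‖fourierCoef f ξ‖ ^ p) ^ (1/p) ≤ C * (A + B) :=
  szasz_bernstein_general p s hp0 hp1 hs0
end
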